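/- arXiv:1011.5585 — 3 statements merged into one kernel-verified Lean document; each statement's English description precedes it below -/
import Mathlib

section
/- Fix a nonnegative integer n, a positive integer N ≥ n, real numbers α, β, δ such that neither α+1 nor β+δ+1 lies in {0, −1, …, −(n−1)}, and a real number x. Let φ : (0,1) → ℝ be any function satisfying φ(q) − (1 + q^{δ−N} + (1−q)² x) = o((1−q)²) as q tends to 1 from the left. Then lim_{q↑1} R_n( φ(q) ; q^α, q^β, q^{−N−1}, q^δ | q ) = R_n(x; α, β, −N−1, δ). -/
open Filter Topology Asymptotics

/-- The `q`-shifted factorial `(z;q)_k = ∏_{j=0}^{k-1} (1 - z q^j)`. -/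
noncomputable def qPoch (q z : ℝ) (k : ℕ) : ℝ :=
  ∏ j ∈ Finset.range k, (1 - z * q ^ j)

/-- The rising factorial (Pochhammer symbol) `(z)_k = z (z+1) ⋯ (z+k-1)`. -/
noncomputable def poch (z : ℝ) (k : ℕ) : ℝ :=
  ∏ j ∈ Finset.range k, (z + (j : ℝ))

/-- The big `q`-Jacobi polynomial `P_n(x;a,b,c;q)`. -/
noncomputable def bigQJacobi (q a b c : ℝ) (n : ℕ) (x : ℝ) : ℝ :=
  ∑ k ∈ Finset.range (n + 1),
    qPoch q ((q : ℝ) ^ (-(n : ℤ))) k * qPoch q (q ^ (n + 1) * a * b) k *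
      qPoch q x k * q ^ k /
      (qPoch q (q * a) k * qPoch q (q * c) k * qPoch q q k)

/-- The `q`-Racah polynomial `R_n(x; α, β, q^{-N-1}, δ | q)`, written as a polynomial in `x`. -/
noncomputable def qRacahPoly (q α β δ : ℝ) (N : ℕ) (n : ℕ) (x : ℝ) : ℝ :=
  ∑ k ∈ Finset.range (n + 1),
    qPoch q ((q : ℝ) ^ (-(n : ℤ))) k * qPoch q (q ^ (n + 1) * α * β) k * q ^ k /
      (qPoch q (q * α) k * qPoch q (q * β * δ) k * qPoch q q k) *
      ∏ j ∈ Finset.range k,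
        (1 - q ^ j * x + (q : ℝ) ^ (2 * (j : ℤ) - (N : ℤ)) * δ) /
          (1 - (q : ℝ) ^ ((j : ℤ) - (N : ℤ)))

/-- The `q`-Hahn polynomial `Q_n(X; α, β, N; q)`, written as a polynomial in `X`. -/
noncomputable def qHahn (q α β : ℝ) (N : ℕ) (n : ℕ) (X : ℝ) : ℝ :=
  ∑ k ∈ Finset.range (n + 1),
    qPoch q ((q : ℝ) ^ (-(n : ℤ))) k * qPoch q (q ^ (n + 1) * α * β) k *
      qPoch q X k * q ^ k /
      (qPoch q (q * α) k * qPoch q ((q : ℝ) ^ (-(N : ℤ))) k * qPoch q q k)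

/-- The little `q`-Jacobi polynomial `p_n(x; a, b; q)`. -/
noncomputable def littleQJacobi (q a b : ℝ) (n : ℕ) (x : ℝ) : ℝ :=
  ∑ k ∈ Finset.range (n + 1),
    qPoch q ((q : ℝ) ^ (-(n : ℤ))) k * qPoch q (a * b * q ^ (n + 1)) k /
      (qPoch q (a * q) k * qPoch q q k) * (q * x) ^ k

/-- The Askey–Wilson polynomial `p_n(x; a, b, c, d | q)`, written as a polynomial in `x`. -/
noncomputable def askeyWilson (q a b c d : ℝ) (n : ℕ) (x : ℝ) : ℝ :=
  a ^ (-(n : ℤ)) * qPoch q (a * b) n * qPoch q (a * c) n * qPoch q (a * d) n *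
    ∑ k ∈ Finset.range (n + 1),
      qPoch q ((q : ℝ) ^ (-(n : ℤ))) k *
        qPoch q (a * b * c * d * (q : ℝ) ^ ((n : ℤ) - 1)) k * q ^ k /
        (qPoch q (a * b) k * qPoch q (a * c) k * qPoch q (a * d) k * qPoch q q k) *
        ∏ j ∈ Finset.range k, (1 - 2 * a * q ^ j * x + a ^ 2 * q ^ (2 * j))

/-- The Wilson polynomial `W_n(x; a, b, c, d)`, written as a polynomial in `x`. -/
noncomputable def wilson (a b c d : ℝ) (n : ℕ) (x : ℝ) : ℝ :=
  poch (a + b) n * poch (a + c) n * poch (a + d) n *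
    ∑ k ∈ Finset.range (n + 1),
      poch (-(n : ℝ)) k * poch ((n : ℝ) + a + b + c + d - 1) k /
        (poch (a + b) k * poch (a + c) k * poch (a + d) k * (Nat.factorial k : ℝ)) *
        ∏ j ∈ Finset.range k, ((a + (j : ℝ)) ^ 2 + x)

/-- The Racah polynomial `R_n(x; α, β, -N-1, δ)`, written as a polynomial in `x`. -/
noncomputable def racah (α β δ : ℝ) (N : ℕ) (n : ℕ) (x : ℝ) : ℝ :=
  ∑ k ∈ Finset.range (n + 1),
    poch (-(n : ℝ)) k * poch ((n : ℝ) + α + β + 1) k /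
      (poch (α + 1) k * poch (β + δ + 1) k * poch (-(N : ℝ)) k * (Nat.factorial k : ℝ)) *
      ∏ j ∈ Finset.range k, ((j : ℝ) * (δ - (N : ℝ) + (j : ℝ)) - x)

/-- The Hahn polynomial `Q_n(x; α, β, N)`. -/
noncomputable def hahn (α β : ℝ) (N : ℕ) (n : ℕ) (x : ℝ) : ℝ :=
  ∑ k ∈ Finset.range (n + 1),
    poch (-(n : ℝ)) k * poch ((n : ℝ) + α + β + 1) k * poch (-x) k /
      (poch (α + 1) k * poch (-(N : ℝ)) k * (Nat.factorial k : ℝ))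


/-! ### Auxiliary lemmas for the limit -/

lemma tendsto_one_sub_rpow_div (a : ℝ) :
    Tendsto (fun q : ℝ => (1 - q ^ a) / (1 - q)) (𝓝[Set.Ioo (0:ℝ) 1] 1) (𝓝 a) := by
  have hd : HasDerivAt (fun x : ℝ => x ^ a) a 1 := by
    have := Real.hasDerivAt_rpow_const (p := a) (x := 1) (Or.inl one_ne_zero)
    simpa using this
  have h := hasDerivAt_iff_tendsto_slope.mp hd
  have h2 : Tendsto (fun q : ℝ => (1 - q ^ a) / (1 - q)) (𝓝[≠] (1:ℝ)) (𝓝 a) := by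
    refine h.congr fun q => ?_
    rw [slope_def_field, Real.one_rpow, ← neg_div_neg_eq, neg_sub, neg_sub]
  exact h2.mono_left (nhdsWithin_mono _ fun y hy => ne_of_lt hy.2)

lemma tendsto_npow_one' (k : ℕ) :
    Tendsto (fun q : ℝ => q ^ k) (𝓝[Set.Ioo (0:ℝ) 1] 1) (𝓝 1) := by
  have := ((continuous_pow k).tendsto (1:ℝ)).mono_left (nhdsWithin_le_nhds
    (s := Set.Ioo (0:ℝ) 1))
  simpa using this

lemma tendsto_M (N : ℕ) (δ x : ℝ) (φ : ℝ → ℝ)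
    (hφ : (fun q : ℝ => φ q - (1 + q ^ (δ - (N : ℝ)) + (1 - q) ^ 2 * x))
      =o[𝓝[Set.Ioo (0 : ℝ) 1] 1] fun q : ℝ => (1 - q) ^ 2) (j : ℕ) :
    Tendsto (fun q : ℝ => (1 - q ^ j * φ q + q ^ (2 * (j:ℝ) - N + δ)) / (1 - q) ^ 2)
      (𝓝[Set.Ioo (0:ℝ) 1] 1) (𝓝 ((j:ℝ) * (δ - N + j) - x)) := by
  have h1 := tendsto_one_sub_rpow_div (j:ℝ)
  have h2 := tendsto_one_sub_rpow_div ((j:ℝ) + δ - N)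
  have h3 := tendsto_npow_one' j
  have hε := hφ.tendsto_div_nhds_zero
  have hmain : Tendsto (fun q : ℝ =>
      (1 - q ^ ((j:ℝ))) / (1 - q) * ((1 - q ^ ((j:ℝ) + δ - N)) / (1 - q))
        - q ^ j * x
        - q ^ j * ((φ q - (1 + q ^ (δ - (N : ℝ)) + (1 - q) ^ 2 * x)) / (1 - q) ^ 2))
      (𝓝[Set.Ioo (0:ℝ) 1] 1) (𝓝 ((j:ℝ) * ((j:ℝ) + δ - N) - 1 * x - 1 * 0)) :=
    ((h1.mul h2).sub (h3.mul tendsto_const_nhds)).sub (h3.mul hε)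
  have hlim : (j:ℝ) * ((j:ℝ) + δ - N) - 1 * x - 1 * 0 = (j:ℝ) * (δ - N + j) - x := by ring
  rw [hlim] at hmain
  refine hmain.congr' ?_
  filter_upwards [self_mem_nhdsWithin] with q hq
  obtain ⟨hq0, hq1⟩ := hq
  have hq1' : (1:ℝ) - q ≠ 0 := by intro h; nlinarith
  have hA : q ^ j = q ^ ((j:ℝ)) := (Real.rpow_natCast q j).symm
  have e1 : q ^ ((j:ℝ) + δ - (N:ℝ)) = q ^ ((j:ℝ)) * q ^ (δ - (N:ℝ)) := by
    rw [← Real.rpow_add hq0]; ring_nf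
  have e2 : q ^ (2 * (j:ℝ) - (N:ℝ) + δ) = q ^ ((j:ℝ)) * (q ^ ((j:ℝ)) * q ^ (δ - (N:ℝ))) := by
    rw [← Real.rpow_add hq0, ← Real.rpow_add hq0]; ring_nf
  rw [e1, e2, hA]
  field_simp
  ring

lemma my_div3 (A B C c : ℝ) : A / c * (B / c) * (C / c ^ 2) = A * B * C / c ^ 4 := by
  rw [div_mul_div_comm, div_mul_div_comm]
  congr 1
  ring

lemma my_div4 (A B C D c : ℝ) : A / c * (B / c) * (C / c) * (D / c) = A * B * C * D / c ^ 4 := by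
  rw [div_mul_div_comm, div_mul_div_comm, div_mul_div_comm]
  congr 1
  ring

lemma my_div_div_div (a b c : ℝ) (hc : c ≠ 0) : (a / c) / (b / c) = a / b := by
  rcases eq_or_ne b 0 with rfl | hb
  · simp
  · field_simp

noncomputable def Hfun (n N : ℕ) (α β δ : ℝ) (φ : ℝ → ℝ) (j : ℕ) (q : ℝ) : ℝ :=
  ((1 - q ^ (-(n:ℝ) + j)) * (1 - q ^ ((n:ℝ) + 1 + α + β + j)) *
      (1 - q ^ j * φ q + q ^ (2 * (j:ℝ) - N + δ))) /
    ((1 - q ^ (1 + α + (j:ℝ))) * (1 - q ^ (1 + β + δ + (j:ℝ))) * (1 - q ^ (1 + (j:ℝ))) *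
      (1 - q ^ (-(N:ℝ) + j)))

noncomputable def Hlim (n N : ℕ) (α β δ x : ℝ) (j : ℕ) : ℝ :=
  ((-(n:ℝ) + j) * ((n:ℝ) + 1 + α + β + j) * ((j:ℝ) * (δ - N + j) - x)) /
    ((1 + α + (j:ℝ)) * (1 + β + δ + (j:ℝ)) * (1 + (j:ℝ)) * (-(N:ℝ) + j))

lemma tendsto_H (n N : ℕ) (α β δ x : ℝ) (φ : ℝ → ℝ)
    (hφ : (fun q : ℝ => φ q - (1 + q ^ (δ - (N : ℝ)) + (1 - q) ^ 2 * x))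
      =o[𝓝[Set.Ioo (0 : ℝ) 1] 1] fun q : ℝ => (1 - q) ^ 2)
    (j : ℕ) (hjN : j < N)
    (hα' : α + 1 + (j:ℝ) ≠ 0) (hβδ' : β + δ + 1 + (j:ℝ) ≠ 0) :
    Tendsto (Hfun n N α β δ φ j) (𝓝[Set.Ioo (0:ℝ) 1] 1) (𝓝 (Hlim n N α β δ x j)) := by
  have hnum : Tendsto (fun q : ℝ =>
      ((1 - q ^ (-(n:ℝ) + j)) * (1 - q ^ ((n:ℝ) + 1 + α + β + j)) *
        (1 - q ^ j * φ q + q ^ (2 * (j:ℝ) - N + δ))) / (1 - q) ^ 4)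
      (𝓝[Set.Ioo (0:ℝ) 1] 1)
      (𝓝 ((-(n:ℝ) + j) * ((n:ℝ) + 1 + α + β + j) * ((j:ℝ) * (δ - N + j) - x))) := by
    have := ((tendsto_one_sub_rpow_div (-(n:ℝ) + j)).mul
      (tendsto_one_sub_rpow_div ((n:ℝ) + 1 + α + β + j))).mul (tendsto_M N δ x φ hφ j)
    exact this.congr fun q => my_div3 _ _ _ _
  have hden : Tendsto (fun q : ℝ =>
      ((1 - q ^ (1 + α + (j:ℝ))) * (1 - q ^ (1 + β + δ + (j:ℝ))) * (1 - q ^ (1 + (j:ℝ))) *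
        (1 - q ^ (-(N:ℝ) + j))) / (1 - q) ^ 4)
      (𝓝[Set.Ioo (0:ℝ) 1] 1)
      (𝓝 ((1 + α + (j:ℝ)) * (1 + β + δ + (j:ℝ)) * (1 + (j:ℝ)) * (-(N:ℝ) + j))) := by
    have := (((tendsto_one_sub_rpow_div (1 + α + (j:ℝ))).mul
      (tendsto_one_sub_rpow_div (1 + β + δ + (j:ℝ)))).mul
      (tendsto_one_sub_rpow_div (1 + (j:ℝ)))).mul (tendsto_one_sub_rpow_div (-(N:ℝ) + j))
    exact this.congr fun q => my_div4 _ _ _ _ _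
  have hden_ne : (1 + α + (j:ℝ)) * (1 + β + δ + (j:ℝ)) * (1 + (j:ℝ)) * (-(N:ℝ) + j) ≠ 0 := by
    have h1 : (1:ℝ) + α + j ≠ 0 := by intro h; apply hα'; linarith
    have h2 : (1:ℝ) + β + δ + j ≠ 0 := by intro h; apply hβδ'; linarith
    have h3 : (1:ℝ) + (j:ℝ) ≠ 0 := by positivity
    have h4 : -(N:ℝ) + j ≠ 0 := by
      have : (j:ℝ) < N := by exact_mod_cast hjN
      intro h; linarith
    exact mul_ne_zero (mul_ne_zero (mul_ne_zero h1 h2) h3) h4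
  have := hnum.div hden hden_ne
  refine this.congr' ?_
  filter_upwards [self_mem_nhdsWithin] with q hq
  have hq1' : ((1:ℝ) - q) ^ 4 ≠ 0 := by
    have h01 : (0:ℝ) < 1 - q := by linarith [hq.2]
    positivity
  simp only [Pi.div_apply]
  rw [my_div_div_div _ _ _ hq1']
  rfl

lemma qside (n N k : ℕ) (α β δ : ℝ) (φ : ℝ → ℝ) (q : ℝ) (hq0 : 0 < q) :
    qPoch q ((q:ℝ) ^ (-(n : ℤ))) k * qPoch q (q ^ (n + 1) * q ^ α * q ^ β) k * q ^ k /
      (qPoch q (q * q ^ α) k * qPoch q (q * q ^ β * q ^ δ) k * qPoch q q k) *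
      ∏ j ∈ Finset.range k,
        (1 - q ^ j * φ q + (q:ℝ) ^ (2 * (j:ℤ) - (N:ℤ)) * q ^ δ) / (1 - (q:ℝ) ^ ((j:ℤ) - (N:ℤ)))
    = q ^ k * ∏ j ∈ Finset.range k, Hfun n N α β δ φ j q := by
  have A : ∀ j : ℕ, (q:ℝ) ^ (-(n:ℤ)) * q ^ j = q ^ (-(n:ℝ) + (j:ℝ)) := fun j => by
    rw [Real.rpow_add hq0, ← Real.rpow_natCast q j, ← Real.rpow_intCast q (-(n:ℤ))]
    norm_num
  have B : ∀ j : ℕ, q ^ (n+1) * q ^ α * q ^ β * q ^ j = q ^ ((n:ℝ) + 1 + α + β + (j:ℝ)) :=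
    fun j => by
    rw [Real.rpow_add hq0, Real.rpow_add hq0, Real.rpow_add hq0,
      ← Real.rpow_natCast q j, ← Real.rpow_natCast q (n+1)]
    norm_num
  have C : ∀ j : ℕ, q * q ^ α * q ^ j = q ^ (1 + α + (j:ℝ)) := fun j => by
    rw [Real.rpow_add hq0, Real.rpow_add hq0, Real.rpow_one,
      ← Real.rpow_natCast q j]
  have D : ∀ j : ℕ, q * q ^ β * q ^ δ * q ^ j = q ^ (1 + β + δ + (j:ℝ)) := fun j => by
    rw [Real.rpow_add hq0, Real.rpow_add hq0, Real.rpow_add hq0, Real.rpow_one,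
      ← Real.rpow_natCast q j]
  have E : ∀ j : ℕ, q * q ^ j = q ^ (1 + (j:ℝ)) := fun j => by
    rw [Real.rpow_add hq0, Real.rpow_one, ← Real.rpow_natCast q j]
  have F : ∀ j : ℕ, (q:ℝ) ^ (2 * (j:ℤ) - (N:ℤ)) * q ^ δ = q ^ (2 * (j:ℝ) - N + δ) := fun j => by
    rw [Real.rpow_add hq0, ← Real.rpow_intCast q (2 * (j:ℤ) - (N:ℤ))]
    norm_num
  have G : ∀ j : ℕ, (q:ℝ) ^ ((j:ℤ) - (N:ℤ)) = q ^ (-(N:ℝ) + (j:ℝ)) := fun j => by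
    rw [← Real.rpow_intCast q ((j:ℤ) - (N:ℤ))]
    norm_num
    rw [show ((j:ℝ) - (N:ℝ)) = -(N:ℝ) + (j:ℝ) by ring]
  have hA : qPoch q ((q:ℝ) ^ (-(n : ℤ))) k
      = ∏ j ∈ Finset.range k, (1 - q ^ (-(n:ℝ) + (j:ℝ))) := by
    unfold qPoch; exact Finset.prod_congr rfl fun j _ => by rw [A j]
  have hB : qPoch q (q ^ (n + 1) * q ^ α * q ^ β) k
      = ∏ j ∈ Finset.range k, (1 - q ^ ((n:ℝ) + 1 + α + β + (j:ℝ))) := by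
    unfold qPoch; exact Finset.prod_congr rfl fun j _ => by rw [B j]
  have hC : qPoch q (q * q ^ α) k = ∏ j ∈ Finset.range k, (1 - q ^ (1 + α + (j:ℝ))) := by
    unfold qPoch; exact Finset.prod_congr rfl fun j _ => by rw [C j]
  have hD : qPoch q (q * q ^ β * q ^ δ) k
      = ∏ j ∈ Finset.range k, (1 - q ^ (1 + β + δ + (j:ℝ))) := by
    unfold qPoch; exact Finset.prod_congr rfl fun j _ => by rw [D j]
  have hE : qPoch q q k = ∏ j ∈ Finset.range k, (1 - q ^ (1 + (j:ℝ))) := by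
    unfold qPoch; exact Finset.prod_congr rfl fun j _ => by rw [E j]
  have hFG : (∏ j ∈ Finset.range k,
        (1 - q ^ j * φ q + (q:ℝ) ^ (2 * (j:ℤ) - (N:ℤ)) * q ^ δ) / (1 - (q:ℝ) ^ ((j:ℤ) - (N:ℤ))))
      = ∏ j ∈ Finset.range k,
        (1 - q ^ j * φ q + q ^ (2 * (j:ℝ) - N + δ)) / (1 - q ^ (-(N:ℝ) + (j:ℝ))) :=
    Finset.prod_congr rfl fun j _ => by rw [F j, G j]
  rw [hA, hB, hC, hD, hE, hFG]
  unfold Hfun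
  simp only [Finset.prod_div_distrib, Finset.prod_mul_distrib]
  ring

lemma target_eq (n N k : ℕ) (α β δ x : ℝ) :
    poch (-(n : ℝ)) k * poch ((n : ℝ) + α + β + 1) k /
      (poch (α + 1) k * poch (β + δ + 1) k * poch (-(N : ℝ)) k * (Nat.factorial k : ℝ)) *
      ∏ j ∈ Finset.range k, ((j : ℝ) * (δ - (N : ℝ) + (j : ℝ)) - x)
    = ∏ j ∈ Finset.range k, Hlim n N α β δ x j := by
  have hfac : (Nat.factorial k : ℝ) = ∏ j ∈ Finset.range k, (1 + (j:ℝ)) := by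
    rw [← Finset.prod_range_add_one_eq_factorial k]
    push_cast
    exact Finset.prod_congr rfl fun j _ => by ring
  have e1 : poch ((n : ℝ) + α + β + 1) k
      = ∏ j ∈ Finset.range k, ((n:ℝ) + 1 + α + β + (j:ℝ)) := by
    unfold poch; exact Finset.prod_congr rfl fun j _ => by ring
  have e2 : poch (α + 1) k = ∏ j ∈ Finset.range k, (1 + α + (j:ℝ)) := by
    unfold poch; exact Finset.prod_congr rfl fun j _ => by ring
  have e3 : poch (β + δ + 1) k = ∏ j ∈ Finset.range k, (1 + β + δ + (j:ℝ)) := by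
    unfold poch; exact Finset.prod_congr rfl fun j _ => by ring
  rw [hfac, e1, e2, e3]
  unfold poch Hlim
  simp only [Finset.prod_div_distrib, Finset.prod_mul_distrib]
  ring

/-- Limit from `q`-Racah polynomials to Racah polynomials, generalized form (20)
of the paper: the argument may be perturbed by `o((1-q)^2)`. -/
theorem qRacah_tendsto_racah_general (n N : ℕ) (hN : 0 < N) (hnN : n ≤ N) (α β δ : ℝ)
    (hα : ∀ k : ℕ, k < n → α + 1 + (k : ℝ) ≠ 0)
    (hβδ : ∀ k : ℕ, k < n → β + δ + 1 + (k : ℝ) ≠ 0) (x : ℝ) (φ : ℝ → ℝ)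
    (hφ : (fun q : ℝ => φ q - (1 + q ^ (δ - (N : ℝ)) + (1 - q) ^ 2 * x))
      =o[𝓝[Set.Ioo (0 : ℝ) 1] 1] fun q : ℝ => (1 - q) ^ 2) :
    Tendsto (fun q : ℝ => qRacahPoly q (q ^ α) (q ^ β) (q ^ δ) N n (φ q))
      (𝓝[Set.Ioo (0 : ℝ) 1] 1) (𝓝 (racah α β δ N n x)) := by
  unfold qRacahPoly racah
  apply tendsto_finset_sum
  intro k hk
  have hk' : k ≤ n := Nat.lt_succ_iff.mp (Finset.mem_range.mp hk)
  have hT : Tendsto (fun q : ℝ => q ^ k * ∏ j ∈ Finset.range k, Hfun n N α β δ φ j q)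
      (𝓝[Set.Ioo (0 : ℝ) 1] 1) (𝓝 (1 * ∏ j ∈ Finset.range k, Hlim n N α β δ x j)) := by
    refine (tendsto_npow_one' k).mul (tendsto_finset_prod _ fun j hj => ?_)
    have hjk := Finset.mem_range.mp hj
    exact tendsto_H n N α β δ x φ hφ j (lt_of_lt_of_le hjk (le_trans hk' hnN))
      (hα j (lt_of_lt_of_le hjk hk')) (hβδ j (lt_of_lt_of_le hjk hk'))
  rw [one_mul, ← target_eq n N k α β δ x] at hT
  refine hT.congr' ?_
  filter_upwards [self_mem_nhdsWithin] with q hq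
  exact (qside n N k α β δ φ q hq.1).symm
end

section
/- Fix a nonnegative integer n, a positive integer N ≥ n, and real numbers α, β, δ such that neither α+1 nor β+δ+1 lies in {0, −1, …, −(n−1)}. Then for every real y, lim_{q↑1} R_n( q^{−y} + q^{y+δ−N} ; q^α, q^β, q^{−N−1}, q^δ | q ) = R_n( y(y+δ−N) ; α, β, −N−1, δ ), where the limit is taken as q tends to 1 from within (0,1). -/
open Filter Topology Asymptotics

lemma tendsto_ratio (a b : ℝ) (hb : b ≠ 0) :
    Tendsto (fun q : ℝ => (1 - q ^ a) / (1 - q ^ b)) (𝓝[Set.Ioo (0:ℝ) 1] 1) (𝓝 (a / b)) := by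
  have h := (tendsto_one_sub_rpow_div a).div (tendsto_one_sub_rpow_div b) hb
  refine h.congr' ?_
  filter_upwards [self_mem_nhdsWithin] with q hq
  have h1 : (1:ℝ) - q ≠ 0 := by have := hq.2; intro h; nlinarith
  rw [Pi.div_apply, div_div_div_cancel_right₀ h1]

lemma tendsto_id_one : Tendsto (fun q : ℝ => q) (𝓝[Set.Ioo (0:ℝ) 1] 1) (𝓝 1) :=
  tendsto_id.mono_left nhdsWithin_le_nhds

lemma prod_combineA (k : ℕ) (a b c d e f g : ℕ → ℝ) :
    (∏ j ∈ Finset.range k, a j) * (∏ j ∈ Finset.range k, b j) /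
      ((∏ j ∈ Finset.range k, c j) * (∏ j ∈ Finset.range k, d j) *
       (∏ j ∈ Finset.range k, e j) * (∏ j ∈ Finset.range k, f j)) *
      ∏ j ∈ Finset.range k, g j
    = ∏ j ∈ Finset.range k, (a j * b j * g j / (c j * d j * e j * f j)) := by
  simp only [div_eq_mul_inv, mul_inv, Finset.prod_mul_distrib, Finset.prod_inv_distrib]
  ring

lemma prod_combineB (k : ℕ) (q : ℝ) (a b c d e g : ℕ → ℝ) :
    (∏ j ∈ Finset.range k, a j) * (∏ j ∈ Finset.range k, b j) * q ^ k /
      ((∏ j ∈ Finset.range k, c j) * (∏ j ∈ Finset.range k, d j) *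
       (∏ j ∈ Finset.range k, e j)) *
      ∏ j ∈ Finset.range k, g j
    = ∏ j ∈ Finset.range k, (a j * b j * q * g j / (c j * d j * e j)) := by
  rw [show q ^ k = ∏ _j ∈ Finset.range k, q by simp]
  simp only [div_eq_mul_inv, mul_inv, Finset.prod_mul_distrib, Finset.prod_inv_distrib]
  ring

/-- Limit from `q`-Racah polynomials to Racah polynomials, formula (19) of the paper. -/
theorem qRacah_tendsto_racah_quadratic (n N : ℕ) (hN : 0 < N) (hnN : n ≤ N) (α β δ : ℝ)
    (hα : ∀ k : ℕ, k < n → α + 1 + (k : ℝ) ≠ 0)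
    (hβδ : ∀ k : ℕ, k < n → β + δ + 1 + (k : ℝ) ≠ 0) (y : ℝ) :
    Tendsto (fun q : ℝ => qRacahPoly q (q ^ α) (q ^ β) (q ^ δ) N n
        (q ^ (-y) + q ^ (y + δ - (N : ℝ))))
      (𝓝[Set.Ioo (0 : ℝ) 1] 1) (𝓝 (racah α β δ N n (y * (y + δ - (N : ℝ))))) := by
  unfold qRacahPoly racah
  refine tendsto_finset_sum _ fun k hk => ?_
  have hk' : k ≤ n := Nat.lt_succ_iff.mp (Finset.mem_range.mp hk)
  set L : ℕ → ℝ := fun j =>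
    1 * (((j:ℝ) - n) / ((j:ℝ) + 1)) * (((n:ℝ) + 1 + α + β + j) / (α + 1 + (j:ℝ)))
      * (((j:ℝ) - y) / (β + δ + 1 + (j:ℝ)))
      * (((j:ℝ) + y + δ - N) / (-(N:ℝ) + (j:ℝ))) with hLdef
  have key : ∀ j ∈ Finset.range k,
      Tendsto (fun q : ℝ =>
          q * ((1 - q ^ ((j:ℝ) - n)) / (1 - q ^ ((j:ℝ) + 1)))
            * ((1 - q ^ ((n:ℝ) + 1 + α + β + j)) / (1 - q ^ (α + 1 + (j:ℝ))))
            * ((1 - q ^ ((j:ℝ) - y)) / (1 - q ^ (β + δ + 1 + (j:ℝ))))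
            * ((1 - q ^ ((j:ℝ) + y + δ - N)) / (1 - q ^ (-(N:ℝ) + (j:ℝ)))))
        (𝓝[Set.Ioo (0:ℝ) 1] 1) (𝓝 (L j)) := by
    intro j hj
    have hjk : j < k := Finset.mem_range.mp hj
    have hjn : j < n := lt_of_lt_of_le hjk hk'
    have hjN : j < N := lt_of_lt_of_le hjn hnN
    have h1 : ((j:ℝ) + 1) ≠ 0 := by positivity
    have h2 : α + 1 + (j:ℝ) ≠ 0 := hα j hjn
    have h3 : β + δ + 1 + (j:ℝ) ≠ 0 := hβδ j hjn
    have h4 : -(N:ℝ) + (j:ℝ) ≠ 0 := by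
      have : (j:ℝ) < N := by exact_mod_cast hjN
      intro h; linarith
    exact ((((tendsto_id_one.mul (tendsto_ratio _ _ h1)).mul
      (tendsto_ratio _ _ h2)).mul (tendsto_ratio _ _ h3)).mul (tendsto_ratio _ _ h4))
  have hlim := tendsto_finset_prod (Finset.range k) key
  have hfac : (Nat.factorial k : ℝ) = ∏ j ∈ Finset.range k, ((j:ℝ) + 1) := by
    rw [← Finset.prod_range_add_one_eq_factorial]
    push_cast
    rfl
  have hA : (∏ j ∈ Finset.range k, L j) =
      poch (-(n : ℝ)) k * poch ((n : ℝ) + α + β + 1) k /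
        (poch (α + 1) k * poch (β + δ + 1) k * poch (-(N : ℝ)) k * (Nat.factorial k : ℝ)) *
        ∏ j ∈ Finset.range k, ((j : ℝ) * (δ - (N : ℝ) + (j : ℝ)) - y * (y + δ - (N:ℝ))) := by
    unfold poch
    rw [hfac, prod_combineA]
    refine Finset.prod_congr rfl fun j hj => ?_
    rw [hLdef]
    simp only [div_eq_mul_inv, mul_inv]
    ring
  rw [hA] at hlim
  refine Tendsto.congr' ?_ hlim
  filter_upwards [self_mem_nhdsWithin] with q hq
  have hq0 : (0:ℝ) < q := hq.1
  have e1 : ∀ j : ℕ, (q:ℝ) ^ (-(n:ℤ)) * q ^ j = q ^ ((j:ℝ) - n) := by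
    intro j
    rw [← Real.rpow_intCast q, ← Real.rpow_natCast q j, ← Real.rpow_add hq0]
    congr 1; push_cast; ring
  have e2 : ∀ j : ℕ, q ^ (n+1) * q ^ α * q ^ β * q ^ j = q ^ ((n:ℝ) + 1 + α + β + j) := by
    intro j
    rw [← Real.rpow_natCast q (n+1), ← Real.rpow_natCast q j, ← Real.rpow_add hq0,
      ← Real.rpow_add hq0, ← Real.rpow_add hq0]
    congr 1; push_cast; ring
  have e3 : ∀ j : ℕ, q * q ^ α * q ^ j = q ^ (α + 1 + (j:ℝ)) := by
    intro j
    have h := Real.rpow_natCast q j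
    calc q * q ^ α * q ^ j = q ^ (1:ℝ) * q ^ α * q ^ ((j:ℕ):ℝ) := by
          rw [Real.rpow_one, Real.rpow_natCast]
      _ = q ^ (α + 1 + (j:ℝ)) := by
          rw [← Real.rpow_add hq0, ← Real.rpow_add hq0]; congr 1; ring
  have e4 : ∀ j : ℕ, q * q ^ β * q ^ δ * q ^ j = q ^ (β + δ + 1 + (j:ℝ)) := by
    intro j
    calc q * q ^ β * q ^ δ * q ^ j = q ^ (1:ℝ) * q ^ β * q ^ δ * q ^ ((j:ℕ):ℝ) := by
          rw [Real.rpow_one, Real.rpow_natCast]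
      _ = q ^ (β + δ + 1 + (j:ℝ)) := by
          rw [← Real.rpow_add hq0, ← Real.rpow_add hq0, ← Real.rpow_add hq0]; congr 1; ring
  have e5 : ∀ j : ℕ, q * q ^ j = q ^ ((j:ℝ) + 1) := by
    intro j
    calc q * q ^ j = q ^ (1:ℝ) * q ^ ((j:ℕ):ℝ) := by
          rw [Real.rpow_one, Real.rpow_natCast]
      _ = q ^ ((j:ℝ) + 1) := by rw [← Real.rpow_add hq0]; congr 1; ring
  have e6 : ∀ j : ℕ, 1 - q ^ j * (q ^ (-y) + q ^ (y + δ - (N:ℝ)))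
        + (q:ℝ) ^ (2 * (j:ℤ) - (N:ℤ)) * q ^ δ
      = (1 - q ^ ((j:ℝ) - y)) * (1 - q ^ ((j:ℝ) + y + δ - N)) := by
    intro j
    have h61 : (q:ℝ) ^ j * (q ^ (-y) + q ^ (y + δ - (N:ℝ)))
        = q ^ ((j:ℝ) - y) + q ^ ((j:ℝ) + y + δ - N) := by
      rw [← Real.rpow_natCast q j, mul_add, ← Real.rpow_add hq0, ← Real.rpow_add hq0,
        show (j:ℝ) + -y = (j:ℝ) - y by ring,
        show (j:ℝ) + (y + δ - (N:ℝ)) = (j:ℝ) + y + δ - N by ring]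
    have h62 : (q:ℝ) ^ (2 * (j:ℤ) - (N:ℤ)) * q ^ δ = q ^ (2 * (j:ℝ) - N + δ) := by
      rw [← Real.rpow_intCast q, ← Real.rpow_add hq0]
      congr 1; push_cast; ring
    have h63 : q ^ ((j:ℝ) - y) * q ^ ((j:ℝ) + y + δ - (N:ℝ)) = q ^ (2 * (j:ℝ) - N + δ) := by
      rw [← Real.rpow_add hq0]; congr 1; ring
    rw [h61, h62, ← h63]; ring
  have e7 : ∀ j : ℕ, (q:ℝ) ^ ((j:ℤ) - (N:ℤ)) = q ^ (-(N:ℝ) + (j:ℝ)) := by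
    intro j
    rw [← Real.rpow_intCast q]
    congr 1; push_cast; ring
  show (∏ j ∈ Finset.range k, _) = _
  unfold qPoch
  rw [prod_combineB k q (fun j => 1 - (q:ℝ) ^ (-(n:ℤ)) * q ^ j)
    (fun j => 1 - q ^ (n+1) * q ^ α * q ^ β * q ^ j)
    (fun j => 1 - q * q ^ α * q ^ j) (fun j => 1 - q * q ^ β * q ^ δ * q ^ j)
    (fun j => 1 - q * q ^ j)
    (fun j => (1 - q ^ j * (q ^ (-y) + q ^ (y + δ - (N:ℝ)))
        + (q:ℝ) ^ (2 * (j:ℤ) - (N:ℤ)) * q ^ δ) / (1 - (q:ℝ) ^ ((j:ℤ) - (N:ℤ))))]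
  refine Finset.prod_congr rfl fun j hj => ?_
  rw [e1 j, e2 j, e3 j, e4 j, e5 j, e6 j, e7 j]
  simp only [div_eq_mul_inv, mul_inv]
  ring
end

section
/- Fix a nonnegative integer n, a positive integer N ≥ n, and real numbers α, β with α+1 not in {0, −1, …, −(n−1)}. Then for every real x, lim_{q↑1} Q_n( 1 + (1−q)x ; q^α, q^β, N ; q ) = Q_n(x; α, β, N), where the limit is taken as q tends to 1 from within (0,1). -/
open Filter Topology Asymptotics

lemma key_ratio (c : ℝ) :
    Tendsto (fun q : ℝ => (1 - q ^ c) / (1 - q)) (𝓝[Set.Ioo (0 : ℝ) 1] 1) (𝓝 c) := by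
  have hd : HasDerivAt (fun q : ℝ => q ^ c) c 1 := by
    simpa using Real.hasDerivAt_rpow_const (x := (1 : ℝ)) (p := c) (Or.inl one_ne_zero)
  have h2 : Tendsto (slope (fun q : ℝ => q ^ c) 1) (𝓝[≠] (1 : ℝ)) (𝓝 c) :=
    hasDerivAt_iff_tendsto_slope.mp hd
  have h3 : Tendsto (fun q : ℝ => (1 - q ^ c) / (1 - q)) (𝓝[≠] (1 : ℝ)) (𝓝 c) := by
    refine h2.congr fun q => ?_
    rw [slope_def_field, Real.one_rpow, ← neg_div_neg_eq]
    ring_nf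
  exact h3.mono_left (nhdsWithin_mono 1 fun y hy => ne_of_lt hy.2)

lemma factor_key (c : ℝ) (f : ℝ → ℝ)
    (hf : ∀ q : ℝ, q ∈ Set.Ioo (0 : ℝ) 1 → f q = q ^ c) (j : ℕ) :
    Tendsto (fun q : ℝ => (1 - f q * q ^ j) / (1 - q)) (𝓝[Set.Ioo (0 : ℝ) 1] 1)
      (𝓝 (c + j)) := by
  refine (key_ratio (c + j)).congr' ?_
  filter_upwards [eventually_mem_nhdsWithin] with q hq
  rw [hf q hq, ← Real.rpow_natCast q j, ← Real.rpow_add hq.1]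

lemma factorX_key (x : ℝ) (j : ℕ) :
    Tendsto (fun q : ℝ => (1 - (1 + (1 - q) * x) * q ^ j) / (1 - q))
      (𝓝[Set.Ioo (0 : ℝ) 1] 1) (𝓝 (-x + j)) := by
  have h2 : Tendsto (fun q : ℝ => x * q ^ j) (𝓝[Set.Ioo (0 : ℝ) 1] 1) (𝓝 (x * 1 ^ j)) :=
    ((continuous_const.mul (continuous_pow j)).tendsto 1).mono_left nhdsWithin_le_nhds
  have h3 := (key_ratio (j : ℝ)).sub h2
  have h4 : (j : ℝ) - x * 1 ^ j = -x + j := by ring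
  rw [h4] at h3
  refine h3.congr' ?_
  filter_upwards [eventually_mem_nhdsWithin] with q hq
  have hs : (1 : ℝ) - q ≠ 0 := (sub_pos.mpr hq.2).ne'
  rw [Real.rpow_natCast]
  field_simp
  ring

lemma fact_prod (k : ℕ) :
    ((Nat.factorial k : ℕ) : ℝ) = ∏ j ∈ Finset.range k, ((1 : ℝ) + j) := by
  rw [← Finset.prod_range_add_one_eq_factorial]
  push_cast
  exact Finset.prod_congr rfl fun j _ => by ring

lemma div_div_div_same' (a b c : ℝ) (hc : c ≠ 0) : a / c / (b / c) = a / b := by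
  rcases eq_or_ne b 0 with h | h
  · simp [h]
  · field_simp

/-- Limit from `q`-Hahn polynomials to Hahn polynomials, formula (26) of the paper. -/
theorem qHahn_tendsto_hahn (n N : ℕ) (hN : 0 < N) (hnN : n ≤ N) (α β : ℝ)
    (hα : ∀ k : ℕ, k < n → α + 1 + (k : ℝ) ≠ 0) (x : ℝ) :
    Tendsto (fun q : ℝ => qHahn q (q ^ α) (q ^ β) N n (1 + (1 - q) * x))
      (𝓝[Set.Ioo (0 : ℝ) 1] 1) (𝓝 (hahn α β N n x)) := by
  unfold qHahn hahn
  refine tendsto_finset_sum _ fun k hk => ?_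
  rw [Finset.mem_range, Nat.lt_succ_iff] at hk
  -- termwise limits of the six ratio-products
  have hA : Tendsto (fun q : ℝ => ∏ j ∈ Finset.range k,
      ((1 - q ^ (-(n : ℤ)) * q ^ j) / (1 - q))) (𝓝[Set.Ioo (0 : ℝ) 1] 1)
      (𝓝 (poch (-(n : ℝ)) k)) := by
    unfold poch
    refine tendsto_finset_prod _ fun j _ => ?_
    refine factor_key (-(n : ℝ)) _ (fun q hq => ?_) j
    rw [show -(n : ℝ) = ((-(n : ℤ) : ℤ) : ℝ) by push_cast; ring, Real.rpow_intCast]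
  have hB : Tendsto (fun q : ℝ => ∏ j ∈ Finset.range k,
      ((1 - q ^ (n + 1) * q ^ α * q ^ β * q ^ j) / (1 - q))) (𝓝[Set.Ioo (0 : ℝ) 1] 1)
      (𝓝 (poch ((n : ℝ) + α + β + 1) k)) := by
    unfold poch
    refine tendsto_finset_prod _ fun j _ => ?_
    refine factor_key ((n : ℝ) + α + β + 1) _ (fun q hq => ?_) j
    rw [show (n : ℝ) + α + β + 1 = (((n : ℕ) + 1 : ℕ) : ℝ) + α + β by push_cast; ring,
      Real.rpow_add hq.1, Real.rpow_add hq.1, Real.rpow_natCast]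
  have hC : Tendsto (fun q : ℝ => ∏ j ∈ Finset.range k,
      ((1 - (1 + (1 - q) * x) * q ^ j) / (1 - q))) (𝓝[Set.Ioo (0 : ℝ) 1] 1)
      (𝓝 (poch (-x) k)) := by
    unfold poch
    exact tendsto_finset_prod _ fun j _ => factorX_key x j
  have hD : Tendsto (fun q : ℝ => ∏ j ∈ Finset.range k,
      ((1 - q * q ^ α * q ^ j) / (1 - q))) (𝓝[Set.Ioo (0 : ℝ) 1] 1)
      (𝓝 (poch (α + 1) k)) := by
    unfold poch
    refine tendsto_finset_prod _ fun j _ => ?_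
    refine factor_key (α + 1) _ (fun q hq => ?_) j
    rw [show α + 1 = (1 : ℝ) + α by ring, Real.rpow_add hq.1, Real.rpow_one]
  have hE : Tendsto (fun q : ℝ => ∏ j ∈ Finset.range k,
      ((1 - q ^ (-(N : ℤ)) * q ^ j) / (1 - q))) (𝓝[Set.Ioo (0 : ℝ) 1] 1)
      (𝓝 (poch (-(N : ℝ)) k)) := by
    unfold poch
    refine tendsto_finset_prod _ fun j _ => ?_
    refine factor_key (-(N : ℝ)) _ (fun q hq => ?_) j
    rw [show -(N : ℝ) = ((-(N : ℤ) : ℤ) : ℝ) by push_cast; ring, Real.rpow_intCast]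
  have hF : Tendsto (fun q : ℝ => ∏ j ∈ Finset.range k,
      ((1 - q * q ^ j) / (1 - q))) (𝓝[Set.Ioo (0 : ℝ) 1] 1)
      (𝓝 ((Nat.factorial k : ℝ))) := by
    rw [show ((Nat.factorial k : ℕ) : ℝ) = ∏ j ∈ Finset.range k, ((1 : ℝ) + j) from
      fact_prod k]
    refine tendsto_finset_prod _ fun j _ => ?_
    exact factor_key 1 _ (fun q hq => (Real.rpow_one q).symm) j
  have hqk : Tendsto (fun q : ℝ => q ^ k) (𝓝[Set.Ioo (0 : ℝ) 1] 1) (𝓝 1) := by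
    simpa using ((continuous_pow k).tendsto 1).mono_left
      (nhdsWithin_le_nhds (s := Set.Ioo (0 : ℝ) 1))
  -- denominator nonzero
  have hDne : poch (α + 1) k ≠ 0 := by
    unfold poch
    refine Finset.prod_ne_zero_iff.mpr fun j hj => ?_
    have := hα j (lt_of_lt_of_le (Finset.mem_range.mp hj) hk)
    intro h; apply this; linarith [h]
  have hEne : poch (-(N : ℝ)) k ≠ 0 := by
    unfold poch
    refine Finset.prod_ne_zero_iff.mpr fun j hj => ?_
    have hj' : (j : ℝ) < (N : ℝ) := by
      exact_mod_cast lt_of_lt_of_le (Finset.mem_range.mp hj) (le_trans hk hnN)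
    intro h; linarith
  have hFne : (Nat.factorial k : ℝ) ≠ 0 := Nat.cast_ne_zero.mpr (Nat.factorial_ne_zero k)
  have hdiv := (((hA.mul hB).mul hC).mul hqk).div ((hD.mul hE).mul hF)
      (mul_ne_zero (mul_ne_zero hDne hEne) hFne)
  rw [mul_one] at hdiv
  refine hdiv.congr' ?_
  filter_upwards [eventually_mem_nhdsWithin] with q hq
  have hs : ((1 : ℝ) - q) ^ k ≠ 0 := pow_ne_zero k (sub_pos.mpr hq.2).ne'
  simp only [Pi.div_apply, qPoch, Finset.prod_div_distrib, Finset.prod_const, Finset.card_range]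
  rw [div_mul_div_comm, div_mul_div_comm, div_mul_eq_mul_div, div_mul_div_comm,
    div_mul_div_comm, div_div_div_same' _ _ _ (by positivity)]
end
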